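/- arXiv:2401.14561 — 12 statements merged into one kernel-verified Lean document; each statement's English description precedes it below -/
import Mathlib

section
/- Let x, u < 0 and y, r > 0 be real numbers with x + y ≤ 0, r + u ≤ 0 and x + y > r + u, and set s = √((u − x)² + 4ry). Define the 2×2 real matrices G0 = [[x, y], [r, u]], G1 = diag(−x−y, −r−u), and B = [[1, 0], [−(x − 2r − u − s)/(x + 2y − u + s), 2(x + y − u − r)/(x + 2y − u + s)]]. Then: (i) x + 2y − u + s > 0; (ii) B is invertible and B·e = e, where e = (1,1)ᵀ; and (iii) B⁻¹ G0 B = G0c and B⁻¹ G1 B = G1c, where G0c = [[x − y(x − 2r − u − s)/(x + 2y − u + s), −2y(r + u − x − y)/(x + 2y − u + s)], [0, u + y(x − 2r − u − s)/(x + 2y − u + s)]] and G1c = [[−x − y, 0], [−(x − 2r − u − s)/2, −r − u]]. In other words, the MMPP₂ representation {G0, G1} is equivalent (via a similarity transform by a matrix whose rows sum to one) to the canonical representation {G0c, G1c}. -/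
/-!
Write `B = !![1, 0; a, 1 - a]`, so that `B` has rows summing to one by construction and
`det B = 1 - a`. Conjugating `G0` by `B` gives an upper triangular matrix exactly when `a` is a
root of `y a² + (x - u) a - r = 0`, and the weight in `B` is such a root. Conjugating a
diagonal matrix by `B` produces a single lower off-diagonal entry, which is `G1c 1 0`.
-/

open Matrix

namespace Matrix

variable {n R : Type*} [Fintype n] [DecidableEq n] [CommRing R]

theorem inv_mul_mul_eq_of_mul_eq_mul {B G H : Matrix n n R} (hB : IsUnit B.det)
    (h : G * B = B * H) : B⁻¹ * G * B = H := by
  rw [mul_assoc, h, nonsing_inv_mul_cancel_left _ _ hB]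

def lowerRowSumOne (a : R) : Matrix (Fin 2) (Fin 2) R :=
  !![1, 0; a, 1 - a]

variable (a : R)

theorem lowerRowSumOne_mulVec_one :
    lowerRowSumOne a *ᵥ ![1, 1] = ![1, 1] := by
  ext i
  fin_cases i <;> simp [lowerRowSumOne]

theorem det_lowerRowSumOne : (lowerRowSumOne a).det = 1 - a := by
  simp [lowerRowSumOne, det_fin_two_of]

theorem mul_lowerRowSumOne_of_quadratic {x y r u : R}
    (ha : y * a ^ 2 + (x - u) * a - r = 0) :
    !![x, y; r, u] * lowerRowSumOne a =
      lowerRowSumOne a * !![x + y * a, y * (1 - a); 0, u - y * a] := by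
  simp only [lowerRowSumOne, mul_fin_two, EmbeddingLike.apply_eq_iff_eq, vecCons_inj,
    and_true]
  exact ⟨⟨by ring, by ring⟩, by linear_combination -ha, by ring⟩

theorem diagonal_mul_lowerRowSumOne {d₁ d₂ c : R} (hc : (1 - a) * c = a * (d₂ - d₁)) :
    !![d₁, 0; 0, d₂] * lowerRowSumOne a =
      lowerRowSumOne a * !![d₁, 0; c, d₂] := by
  simp only [lowerRowSumOne, mul_fin_two, EmbeddingLike.apply_eq_iff_eq, vecCons_inj,
    and_true]
  exact ⟨⟨by ring, by ring⟩, by linear_combination -hc, by ring⟩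

end Matrix

theorem sub_le_sqrt_sq_add (a : ℝ) {b : ℝ} (hb : 0 ≤ b) : a ≤ √(a ^ 2 + b) :=
  (le_abs_self a).trans (Real.abs_le_sqrt (le_add_of_nonneg_right hb))

section CanonicalWeight

/-- The weight `(u - x + s) / (2y)`, the larger root of `y a² + (x - u) a - r = 0` when
`s = √((u - x)² + 4ry)`, with its denominator rationalised. -/
noncomputable def canonicalWeight (x y r u s : ℝ) : ℝ :=
  -(x - 2 * r - u - s) / (x + 2 * y - u + s)

variable {x y r u s : ℝ}

variable (hD : x + 2 * y - u + s ≠ 0)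
include hD

theorem one_sub_canonicalWeight :
    1 - canonicalWeight x y r u s = 2 * (x + y - u - r) / (x + 2 * y - u + s) := by
  rw [canonicalWeight, eq_div_iff hD, sub_mul, div_mul_cancel₀ _ hD]
  ring

theorem canonicalWeight_quadratic (hs : s ^ 2 = (u - x) ^ 2 + 4 * r * y) :
    y * canonicalWeight x y r u s ^ 2 + (x - u) * canonicalWeight x y r u s - r = 0 := by
  rw [canonicalWeight]
  set D := x + 2 * y - u + s with hD_def
  field_simp
  rw [hD_def]
  linear_combination (x + y - u - r) * hs

end CanonicalWeight

theorem mmpp2_canonical_form_general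
    (x y r u : ℝ) (hy : 0 < y) (hr : 0 < r)
    (hgt : r + u < x + y)
    (s : ℝ) (hs : s = Real.sqrt ((u - x) ^ 2 + 4 * r * y))
    (G0 G1 B G0c G1c : Matrix (Fin 2) (Fin 2) ℝ)
    (hG0 : G0 = !![x, y; r, u])
    (hG1 : G1 = !![-x - y, 0; 0, -r - u])
    (hB : B = !![1, 0;
      -(x - 2*r - u - s) / (x + 2*y - u + s), 2*(x + y - u - r) / (x + 2*y - u + s)])
    (hG0c : G0c = !![x - y * (x - 2*r - u - s) / (x + 2*y - u + s),
                      -2*y*(r + u - x - y) / (x + 2*y - u + s);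
                     0, u + y * (x - 2*r - u - s) / (x + 2*y - u + s)])
    (hG1c : G1c = !![-x - y, 0; -(x - 2*r - u - s)/2, -r - u]) :
    0 < x + 2*y - u + s ∧
    IsUnit B ∧
    B.mulVec ![1, 1] = ![1, 1] ∧
    B⁻¹ * G0 * B = G0c ∧
    B⁻¹ * G1 * B = G1c := by
  have hrad : 0 ≤ 4 * r * y := by positivity
  have hsq : s ^ 2 = (u - x) ^ 2 + 4 * r * y := hs ▸ Real.sq_sqrt (by positivity)
  have hD : 0 < x + 2 * y - u + s := by
    linarith [hs ▸ sub_le_sqrt_sq_add (u - x) hrad]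
  have h1a := one_sub_canonicalWeight (r := r) hD.ne'
  set a := canonicalWeight x y r u s
  have hBa : B = lowerRowSumOne a := by
    rw [hB, lowerRowSumOne, h1a]; rfl
  have hdet : IsUnit B.det := by
    rw [hBa, det_lowerRowSumOne, h1a]
    exact (div_pos (by linarith) hD).ne'.isUnit
  refine ⟨hD, (isUnit_iff_isUnit_det B).mpr hdet, hBa ▸ lowerRowSumOne_mulVec_one a, ?_, ?_⟩
  · have hG0c' : G0c = !![x + y * a, y * (1 - a); 0, u - y * a] := by
      rw [hG0c, h1a]
      simp only [a, canonicalWeight, EmbeddingLike.apply_eq_iff_eq, vecCons_inj, and_true]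
      exact ⟨⟨by ring, by ring⟩, trivial, by ring⟩
    apply inv_mul_mul_eq_of_mul_eq_mul hdet
    rw [hG0, hBa, hG0c',
      mul_lowerRowSumOne_of_quadratic a (canonicalWeight_quadratic hD.ne' hsq)]
  · apply inv_mul_mul_eq_of_mul_eq_mul hdet
    rw [hG1, hBa, hG1c]
    apply diagonal_mul_lowerRowSumOne
    rw [h1a]
    simp only [a, canonicalWeight]
    ring

/-- The MMPP₂ representation {G0, G1} is similar, via a matrix B with rows summing to one,
to the canonical representation {G0c, G1c}. -/
theorem mmpp2_canonical_form
    (x y r u : ℝ) (hx : x < 0) (hu : u < 0) (hy : 0 < y) (hr : 0 < r)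
    (hxy : x + y ≤ 0) (hru : r + u ≤ 0) (hgt : r + u < x + y)
    (s : ℝ) (hs : s = Real.sqrt ((u - x) ^ 2 + 4 * r * y))
    (G0 G1 B G0c G1c : Matrix (Fin 2) (Fin 2) ℝ)
    (hG0 : G0 = !![x, y; r, u])
    (hG1 : G1 = !![-x - y, 0; 0, -r - u])
    (hB : B = !![1, 0;
      -(x - 2*r - u - s) / (x + 2*y - u + s), 2*(x + y - u - r) / (x + 2*y - u + s)])
    (hG0c : G0c = !![x - y * (x - 2*r - u - s) / (x + 2*y - u + s),
                      -2*y*(r + u - x - y) / (x + 2*y - u + s);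
                     0, u + y * (x - 2*r - u - s) / (x + 2*y - u + s)])
    (hG1c : G1c = !![-x - y, 0; -(x - 2*r - u - s)/2, -r - u]) :
    0 < x + 2*y - u + s ∧
    IsUnit B ∧
    B.mulVec ![1, 1] = ![1, 1] ∧
    B⁻¹ * G0 * B = G0c ∧
    B⁻¹ * G1 * B = G1c :=
  mmpp2_canonical_form_general x y r u hy hr hgt s hs G0 G1 B G0c G1c hG0 hG1 hB hG0c hG1c
end

section
/- Let x, y, r, u be real numbers with y ≥ 0, r ≥ 0, and set s = √((u − x)² + 4ry). If x + 2y − u + s ≠ 0, then x − y(x − 2r − u − s)/(x + 2y − u + s) = (x + u + s)/2 and u + y(x − 2r − u − s)/(x + 2y − u + s) = (x + u − s)/2. Consequently, the two diagonal entries of the canonical matrix G0c obtained from G0 = [[x, y], [r, u]] are exactly the two eigenvalues of G0, i.e., the roots of λ² − (x + u)λ + (xu − ry) = 0. -/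
/-! With `d = x + 2y − u + s`, the first diagonal entry equals `(x + u + s)/2` because
`(x − u − s) d − 2y (x − 2r − u − s) = (x − u)² − s² + 4ry`, which vanishes by the choice of `s`;
the two diagonal entries have the same sum `x + u` as the two values `(x + u ± s)/2`, and these
are the roots of the characteristic quadratic since its discriminant is `(u − x)² + 4ry = s²`. -/

section

variable {K : Type*} [Field K] {x y r u s : K}

theorem canonical_diag_fst_eq (h2 : (2 : K) ≠ 0) (hs : s ^ 2 = (u - x) ^ 2 + 4 * r * y)
    (hne : x + 2 * y - u + s ≠ 0) :
    x - y * (x - 2 * r - u - s) / (x + 2 * y - u + s) = (x + u + s) / 2 := by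
  rw [sub_div' hne, div_eq_div_iff hne h2]
  linear_combination -hs

theorem canonical_diag_snd_eq (h2 : (2 : K) ≠ 0) (hs : s ^ 2 = (u - x) ^ 2 + 4 * r * y)
    (hne : x + 2 * y - u + s ≠ 0) :
    u + y * (x - 2 * r - u - s) / (x + 2 * y - u + s) = (x + u - s) / 2 := by
  have hfst := canonical_diag_fst_eq h2 hs hne
  field_simp at hfst ⊢
  linear_combination -hfst

theorem char_quadratic_eq_zero (h2 : (2 : K) ≠ 0) (hs : s ^ 2 = (u - x) ^ 2 + 4 * r * y) :
    ((x + u + s) / 2) ^ 2 - (x + u) * ((x + u + s) / 2) + (x * u - r * y) = 0 := by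
  field_simp
  linear_combination hs

end

/-- The diagonal entries of the canonical matrix G0c equal (x+u±s)/2, which are
the eigenvalues of G0, i.e. the roots of λ² − (x+u)λ + (xu − ry) = 0. -/
theorem canonical_diag_entries_are_eigenvalues
    (x y r u s : ℝ) (hy : 0 ≤ y) (hr : 0 ≤ r)
    (hs : s = Real.sqrt ((u - x) ^ 2 + 4 * r * y))
    (hne : x + 2*y - u + s ≠ 0) :
    x - y * (x - 2*r - u - s) / (x + 2*y - u + s) = (x + u + s) / 2 ∧
    u + y * (x - 2*r - u - s) / (x + 2*y - u + s) = (x + u - s) / 2 ∧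
    ((x + u + s)/2)^2 - (x + u) * ((x + u + s)/2) + (x*u - r*y) = 0 ∧
    ((x + u - s)/2)^2 - (x + u) * ((x + u - s)/2) + (x*u - r*y) = 0 := by
  have hs2 : s ^ 2 = (u - x) ^ 2 + 4 * r * y := by
    rw [hs]
    exact Real.sq_sqrt (by positivity)
  have hs2_neg : (-s) ^ 2 = (u - x) ^ 2 + 4 * r * y := by rw [neg_sq, hs2]
  refine ⟨canonical_diag_fst_eq two_ne_zero hs2 hne, canonical_diag_snd_eq two_ne_zero hs2 hne,
    char_quadratic_eq_zero two_ne_zero hs2, ?_⟩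
  simpa only [← sub_eq_add_neg] using char_quadratic_eq_zero two_ne_zero hs2_neg
end

section
/- Let x, u < 0 and y, r > 0 be real numbers with x + y ≤ 0, r + u < 0 and x + y ≥ r + u, and set s = √((u − x)² + 4ry), ζ1 = −(x + u + s)/2 and ζ2 = −(x + u − s)/2. Then the canonical representation {G0c, G1c} of the MMPP₂ {G0 = [[x, y], [r, u]], G1 = diag(−x−y, −r−u)} is a well-defined canonical MAP₂ form with positive exponential rates and valid probabilities: (i) ζ1 > 0 and ζ2 > 0 (equivalently, both diagonal entries of G0c are negative); (ii) a := (−x − y)/ζ1 ∈ [0, 1] and b := (−r − u)/ζ2 ∈ [0, 1]; (iii) the off-diagonal entry of G0c, namely −2y(r + u − x − y)/(x + 2y − u + s), is nonnegative; (iv) all entries of G1c, namely −x − y, −(x − 2r − u − s)/2 and −r − u, are nonnegative; and (v) every row of G0c + G1c sums to zero. -/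
/-!
`G0 = [[x, y], [r, u]]` has trace `x + u` and discriminant `s² = (u - x)² + 4ry`, so its
eigenvalues are `(x + u ± s)/2`; the canonical representation is upper triangular with exactly
these on its diagonal, i.e. `ζ1, ζ2` are the negated eigenvalues. Every sign and
probability condition then reduces to the bounds `x - u - 2r ≤ s ≤ x - u + 2y` and
`s < -(x + u)`, each of which is a comparison of squares against `s²`: the first two amount to
`r + u ≤ x + y`, the last to `ry < xu`.
-/

open Matrix

namespace MMPP2

variable {x y r u s : ℝ}

theorem root_lt_neg_add (hs : s ^ 2 = (u - x) ^ 2 + 4 * r * y) (hy : 0 < y) (hr : 0 < r)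
    (hxy : x + y ≤ 0) (hru : r + u < 0) : s < -(x + u) := by
  refine (abs_lt_of_sq_lt_sq' ?_ (by linarith)).2
  nlinarith [mul_le_mul_of_nonneg_left hxy hr.le, mul_lt_mul_of_pos_right hru hy]

theorem root_le_sub_add_two_mul (hs : s ^ 2 = (u - x) ^ 2 + 4 * r * y) (hy : 0 ≤ y)
    (hr : 0 ≤ r) (hord : r + u ≤ x + y) : s ≤ x - u + 2 * y :=
  le_of_sq_le_sq (by nlinarith [mul_le_mul_of_nonneg_left hord hy]) (by linarith)

theorem sub_sub_two_mul_le_root (hs₀ : 0 ≤ s) (hs : s ^ 2 = (u - x) ^ 2 + 4 * r * y)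
    (hr : 0 ≤ r) (hord : r + u ≤ x + y) : x - u - 2 * r ≤ s :=
  le_of_sq_le_sq (by nlinarith [mul_le_mul_of_nonneg_left hord hr]) hs₀

theorem diag_shift_eq (hs : s ^ 2 = (u - x) ^ 2 + 4 * r * y) (hD : x + 2 * y - u + s ≠ 0) :
    y * (x - 2 * r - u - s) / (x + 2 * y - u + s) = (x - u - s) / 2 := by
  rw [div_eq_div_iff hD two_ne_zero]
  linear_combination hs

theorem off_diag_eq (hs : s ^ 2 = (u - x) ^ 2 + 4 * r * y) (hD : x + 2 * y - u + s ≠ 0) :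
    -2 * y * (r + u - x - y) / (x + 2 * y - u + s) = (x + 2 * y - u - s) / 2 := by
  rw [div_eq_div_iff hD two_ne_zero]
  linear_combination hs

end MMPP2

open MMPP2 in
theorem mmpp2_canonical_form_well_defined_general
    (x y r u : ℝ) (hy : 0 < y) (hr : 0 < r)
    (hxy : x + y ≤ 0) (hru : r + u < 0) (hord : r + u ≤ x + y)
    (s ζ1 ζ2 a b : ℝ)
    (hs : s = Real.sqrt ((u - x) ^ 2 + 4 * r * y))
    (hz1 : ζ1 = -(x + u + s)/2) (hz2 : ζ2 = -(x + u - s)/2)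
    (ha : a = (-x - y)/ζ1) (hb : b = (-r - u)/ζ2)
    (G0c G1c : Matrix (Fin 2) (Fin 2) ℝ)
    (hG0c : G0c = !![x - y * (x - 2*r - u - s) / (x + 2*y - u + s),
                      -2*y*(r + u - x - y) / (x + 2*y - u + s);
                     0, u + y * (x - 2*r - u - s) / (x + 2*y - u + s)])
    (hG1c : G1c = !![-x - y, 0; -(x - 2*r - u - s)/2, -r - u]) :
    0 < ζ1 ∧ 0 < ζ2 ∧
    G0c 0 0 < 0 ∧ G0c 1 1 < 0 ∧
    a ∈ Set.Icc (0:ℝ) 1 ∧ b ∈ Set.Icc (0:ℝ) 1 ∧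
    0 ≤ -2*y*(r + u - x - y) / (x + 2*y - u + s) ∧
    0 ≤ -x - y ∧ 0 ≤ -(x - 2*r - u - s)/2 ∧ 0 ≤ -r - u ∧
    (∀ i, ∑ j, (G0c + G1c) i j = 0) := by
  have hs₀ : 0 ≤ s := hs ▸ Real.sqrt_nonneg _
  have hs2 : s ^ 2 = (u - x) ^ 2 + 4 * r * y := hs ▸ Real.sq_sqrt (by positivity)
  have hlt := root_lt_neg_add hs2 hy hr hxy hru
  have hle := root_le_sub_add_two_mul hs2 hy.le hr.le hord
  have hge := sub_sub_two_mul_le_root hs₀ hs2 hr.le hord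
  have hD : 0 < x + 2 * y - u + s := by linarith
  have hoff := off_diag_eq hs2 hD.ne'
  rw [diag_shift_eq hs2 hD.ne', hoff] at hG0c
  subst hz1 hz2 ha hb
  have hζ1 : 0 < -(x + u + s) / 2 := by linarith
  have hζ2 : 0 < -(x + u - s) / 2 := by linarith
  refine ⟨hζ1, hζ2, ?_, ?_, ?_, ?_, ?_, by linarith, by linarith, by linarith, ?_⟩
  · simp [hG0c]; linarith
  · simp [hG0c]; linarith
  · exact ⟨div_nonneg (by linarith) hζ1.le, (div_le_one hζ1).2 (by linarith)⟩
  · exact ⟨div_nonneg (by linarith) hζ2.le, (div_le_one hζ2).2 (by linarith)⟩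
  · rw [hoff]; linarith
  · refine Fin.forall_fin_two.2 ⟨?_, ?_⟩ <;> simp [hG0c, hG1c, Fin.sum_univ_two] <;> ring

/-- The canonical representation of an MMPP₂ is a well-defined canonical MAP₂ form:
positive rates, probabilities in [0,1], nonnegative off-diagonal entry of G0c,
nonnegative entries of G1c, and zero row sums of G0c + G1c. -/
theorem mmpp2_canonical_form_well_defined
    (x y r u : ℝ) (hx : x < 0) (hu : u < 0) (hy : 0 < y) (hr : 0 < r)
    (hxy : x + y ≤ 0) (hru : r + u < 0) (hord : r + u ≤ x + y)
    (s ζ1 ζ2 a b : ℝ)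
    (hs : s = Real.sqrt ((u - x) ^ 2 + 4 * r * y))
    (hz1 : ζ1 = -(x + u + s)/2) (hz2 : ζ2 = -(x + u - s)/2)
    (ha : a = (-x - y)/ζ1) (hb : b = (-r - u)/ζ2)
    (G0c G1c : Matrix (Fin 2) (Fin 2) ℝ)
    (hG0c : G0c = !![x - y * (x - 2*r - u - s) / (x + 2*y - u + s),
                      -2*y*(r + u - x - y) / (x + 2*y - u + s);
                     0, u + y * (x - 2*r - u - s) / (x + 2*y - u + s)])
    (hG1c : G1c = !![-x - y, 0; -(x - 2*r - u - s)/2, -r - u]) :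
    0 < ζ1 ∧ 0 < ζ2 ∧
    G0c 0 0 < 0 ∧ G0c 1 1 < 0 ∧
    a ∈ Set.Icc (0:ℝ) 1 ∧ b ∈ Set.Icc (0:ℝ) 1 ∧
    0 ≤ -2*y*(r + u - x - y) / (x + 2*y - u + s) ∧
    0 ≤ -x - y ∧ 0 ≤ -(x - 2*r - u - s)/2 ∧ 0 ≤ -r - u ∧
    (∀ i, ∑ j, (G0c + G1c) i j = 0) :=
  mmpp2_canonical_form_well_defined_general x y r u hy hr hxy hru hord s ζ1 ζ2 a b hs hz1 hz2 ha hb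
    G0c G1c hG0c hG1c
end

section
/- Let ζ1, ζ2 > 0 and a, b ∈ [0, 1] be real numbers with aζ1 < bζ2 and ζ1 ≤ bζ2. Define the 2×2 real matrices G0 = (1/(aζ1 − bζ2))·[[ζ1ζ2 − aζ1² − aζ1ζ2 + abζ1ζ2, −a²ζ1² + aζ1² + aζ1ζ2 − ζ1ζ2], [(ζ1 − bζ2)(ζ2 − bζ2), −ζ1ζ2 + bζ2² + bζ1ζ2 − abζ1ζ2]] and G1 = diag(aζ1, bζ2). Then {G0, G1} is a well-defined MMPP₂ rate representation: both diagonal entries of G0 are ≤ 0, both off-diagonal entries of G0 are ≥ 0, both diagonal entries of G1 are ≥ 0, and every row of G0 + G1 sums to zero. -/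
/-!
Every entry of the numerator matrix `N = (a ζ1 - b ζ2) • G0`
(`reconstructionNumerator`) factors into terms whose signs are
fixed by the hypotheses, e.g. `N 0 0 = ζ1 ((1 - a) ζ2 + a (b ζ2 - ζ1))`; dividing by
`a ζ1 - b ζ2 < 0` flips them. The rows of `N` sum to `-(a ζ1 - b ζ2)` times `a ζ1` and `b ζ2`,
which is exactly what the diagonal `G1` cancels.
-/

open Matrix

theorem Matrix.sum_one_div_smul_add_diagonal_eq_zero {n K : Type*} [Fintype n] [DecidableEq n]
    [Field K] {d : K} (hd : d ≠ 0) {N : Matrix n n K} {g : n → K}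
    (hN : ∀ i, ∑ j, N i j = -(d * g i)) (i : n) :
    ∑ j, ((1 / d) • N + diagonal g) i j = 0 := by
  simp only [add_apply, smul_apply, smul_eq_mul, Finset.sum_add_distrib, ← Finset.mul_sum, hN,
    diagonal_apply, Finset.sum_ite_eq, Finset.mem_univ, if_true]
  field_simp
  ring

def reconstructionNumerator (ζ1 ζ2 a b : ℝ) : Matrix (Fin 2) (Fin 2) ℝ :=
  !![ζ1*ζ2 - a*ζ1^2 - a*ζ1*ζ2 + a*b*ζ1*ζ2,
     -a^2*ζ1^2 + a*ζ1^2 + a*ζ1*ζ2 - ζ1*ζ2;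
     (ζ1 - b*ζ2)*(ζ2 - b*ζ2),
     -ζ1*ζ2 + b*ζ2^2 + b*ζ1*ζ2 - a*b*ζ1*ζ2]

section reconstructionNumerator

variable {ζ1 ζ2 a b : ℝ}

theorem reconstructionNumerator_zero_zero_nonneg (h1 : 0 ≤ ζ1) (h2 : 0 ≤ ζ2) (ha0 : 0 ≤ a)
    (ha1 : a ≤ 1) (h1b : ζ1 ≤ b*ζ2) : 0 ≤ reconstructionNumerator ζ1 ζ2 a b 0 0 := by
  have h : reconstructionNumerator ζ1 ζ2 a b 0 0 = ζ1 * ((1 - a) * ζ2 + a * (b*ζ2 - ζ1)) := by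
    simp only [reconstructionNumerator, of_apply, cons_val', cons_val_zero, empty_val',
      cons_val_fin_one]; ring
  rw [h]
  exact mul_nonneg h1 (add_nonneg (mul_nonneg (sub_nonneg.2 ha1) h2)
    (mul_nonneg ha0 (sub_nonneg.2 h1b)))

theorem reconstructionNumerator_one_one_nonneg (h1 : 0 ≤ ζ1) (h2 : 0 ≤ ζ2) (ha1 : a ≤ 1)
    (hb0 : 0 ≤ b) (h1b : ζ1 ≤ b*ζ2) : 0 ≤ reconstructionNumerator ζ1 ζ2 a b 1 1 := by
  have h : reconstructionNumerator ζ1 ζ2 a b 1 1 = ζ2 * ((b*ζ2 - ζ1) + b * ζ1 * (1 - a)) := by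
    simp only [reconstructionNumerator, of_apply, cons_val', cons_val_one, empty_val',
      cons_val_fin_one]; ring
  rw [h]
  exact mul_nonneg h2 (add_nonneg (sub_nonneg.2 h1b)
    (mul_nonneg (mul_nonneg hb0 h1) (sub_nonneg.2 ha1)))

theorem reconstructionNumerator_zero_one_nonpos (h1 : 0 ≤ ζ1) (ha1 : a ≤ 1)
    (haζ : a*ζ1 ≤ ζ2) : reconstructionNumerator ζ1 ζ2 a b 0 1 ≤ 0 := by
  have h : reconstructionNumerator ζ1 ζ2 a b 0 1 = (1 - a) * ζ1 * (a*ζ1 - ζ2) := by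
    simp only [reconstructionNumerator, of_apply, cons_val', cons_val_zero, cons_val_one,
      empty_val', cons_val_fin_one]; ring
  rw [h]
  exact mul_nonpos_of_nonneg_of_nonpos (mul_nonneg (sub_nonneg.2 ha1) h1) (sub_nonpos.2 haζ)

theorem reconstructionNumerator_one_zero_nonpos (h2 : 0 ≤ ζ2) (hb1 : b ≤ 1)
    (h1b : ζ1 ≤ b*ζ2) : reconstructionNumerator ζ1 ζ2 a b 1 0 ≤ 0 := by
  have h : reconstructionNumerator ζ1 ζ2 a b 1 0 = (ζ1 - b*ζ2) * ((1 - b) * ζ2) := by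
    simp only [reconstructionNumerator, of_apply, cons_val', cons_val_zero, cons_val_one,
      empty_val', cons_val_fin_one]; ring
  rw [h]
  exact mul_nonpos_of_nonpos_of_nonneg (sub_nonpos.2 h1b) (mul_nonneg (sub_nonneg.2 hb1) h2)

theorem reconstructionNumerator_row_sum (i : Fin 2) :
    ∑ j, reconstructionNumerator ζ1 ζ2 a b i j = -((a*ζ1 - b*ζ2) * ![a*ζ1, b*ζ2] i) := by
  fin_cases i <;> simp [reconstructionNumerator, Fin.sum_univ_two] <;> ring

end reconstructionNumerator

/-- The Lemma-2 reconstruction formulas produce a well-defined MMPP₂ rate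
representation: nonpositive diagonal and nonnegative off-diagonal entries of G0,
nonnegative diagonal G1, and zero row sums of G0 + G1. -/
theorem reconstruction_is_mmpp2
    (ζ1 ζ2 a b : ℝ) (h1 : 0 < ζ1) (h2 : 0 < ζ2)
    (ha : a ∈ Set.Icc (0:ℝ) 1) (hb : b ∈ Set.Icc (0:ℝ) 1)
    (hab : a*ζ1 < b*ζ2) (h1b : ζ1 ≤ b*ζ2)
    (G0 G1 : Matrix (Fin 2) (Fin 2) ℝ)
    (hG0 : G0 = (1/(a*ζ1 - b*ζ2)) •
      !![ζ1*ζ2 - a*ζ1^2 - a*ζ1*ζ2 + a*b*ζ1*ζ2,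
         -a^2*ζ1^2 + a*ζ1^2 + a*ζ1*ζ2 - ζ1*ζ2;
         (ζ1 - b*ζ2)*(ζ2 - b*ζ2),
         -ζ1*ζ2 + b*ζ2^2 + b*ζ1*ζ2 - a*b*ζ1*ζ2])
    (hG1 : G1 = !![a*ζ1, 0; 0, b*ζ2]) :
    G0 0 0 ≤ 0 ∧ G0 1 1 ≤ 0 ∧ 0 ≤ G0 0 1 ∧ 0 ≤ G0 1 0 ∧
    0 ≤ G1 0 0 ∧ 0 ≤ G1 1 1 ∧
    (∀ i, ∑ j, (G0 + G1) i j = 0) := by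
  obtain ⟨ha0, ha1⟩ := ha
  obtain ⟨hb0, hb1⟩ := hb
  have hd : a*ζ1 - b*ζ2 < 0 := by linarith
  have haζ : a*ζ1 ≤ ζ2 := hab.le.trans (mul_le_of_le_one_left h2.le hb1)
  replace hG0 : G0 = (1/(a*ζ1 - b*ζ2)) • reconstructionNumerator ζ1 ζ2 a b := hG0
  rw [← diagonal_vec2] at hG1
  subst hG0 hG1
  simp only [Matrix.smul_apply, smul_eq_mul, one_div_mul_eq_div, diagonal_apply_eq]
  refine ⟨div_nonpos_of_nonneg_of_nonpos
      (reconstructionNumerator_zero_zero_nonneg h1.le h2.le ha0 ha1 h1b) hd.le,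
    div_nonpos_of_nonneg_of_nonpos
      (reconstructionNumerator_one_one_nonneg h1.le h2.le ha1 hb0 h1b) hd.le,
    div_nonneg_of_nonpos (reconstructionNumerator_zero_one_nonpos h1.le ha1 haζ) hd.le,
    div_nonneg_of_nonpos (reconstructionNumerator_one_zero_nonpos h2.le hb1 h1b) hd.le,
    mul_nonneg ha0 h1.le, mul_nonneg hb0 h2.le,
    sum_one_div_smul_add_diagonal_eq_zero hd.ne reconstructionNumerator_row_sum⟩
end

section
/- Let x, u < 0 and y, r > 0 be real numbers with x + y ≤ 0, r + u < 0 and x + y > r + u. Set s = √((u − x)² + 4ry), ζ1 = −(x + u + s)/2, ζ2 = −(x + u − s)/2, a = (−x − y)/ζ1 and b = (−r − u)/ζ2. Then aζ1 − bζ2 = (r + u) − (x + y) ≠ 0, and the Lemma-2 reconstruction formulas applied to (ζ1, ζ2, a, b) recover the original representation; explicitly: (ζ1ζ2 − aζ1² − aζ1ζ2 + abζ1ζ2)/(aζ1 − bζ2) = x, (−a²ζ1² + aζ1² + aζ1ζ2 − ζ1ζ2)/(aζ1 − bζ2) = y, (ζ1 − bζ2)(ζ2 − bζ2)/(aζ1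 − bζ2) = r, (−ζ1ζ2 + bζ2² + bζ1ζ2 − abζ1ζ2)/(aζ1 − bζ2) = u, and diag(aζ1, bζ2) = diag(−x − y, −r − u). -/
/-!
The canonical rates ζ₁, ζ₂ are the two roots of `t² + (x + u) t + (x u - r y)`, the characteristic
polynomial of `-G0`, so by Vieta `ζ₁ + ζ₂ = -(x + u)` and `ζ₁ ζ₂ = x u - r y`. Together with
`a ζ₁ = -x - y` and `b ζ₂ = -r - u`, these turn each numerator of the reconstruction formulas into
the corresponding entry of `G0` times `a ζ₁ - b ζ₂`. The sign conditions keep the divisions away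
from zero: `ζ₁ ζ₂ = x u - r y > 0` because `-x ≥ y > 0` and `-u > r > 0`.
-/

open Matrix

namespace MMPP2

lemma add_eq_and_mul_eq_of_sq_eq_discrim {K : Type*} [Field K] [CharZero K] {p q s ζ1 ζ2 : K}
    (hs : s ^ 2 = discrim 1 p q) (hz1 : ζ1 = -(p + s) / 2) (hz2 : ζ2 = -(p - s) / 2) :
    ζ1 + ζ2 = -p ∧ ζ1 * ζ2 = q := by
  rw [discrim] at hs
  subst hz1 hz2
  exact ⟨by ring, by linear_combination (-1 / 4 : K) * hs⟩

lemma det_pos {x y r u : ℝ} (hy : 0 < y) (hr : 0 < r) (hxy : x + y ≤ 0) (hru : r + u < 0) :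
    0 < x * u - r * y := by
  nlinarith

lemma reconstruction_eq {x y r u ζ1 ζ2 a b : ℝ} (hS : ζ1 + ζ2 = -(x + u))
    (hP : ζ1 * ζ2 = x * u - r * y) (hA : a * ζ1 = -x - y) (hB : b * ζ2 = -r - u)
    (hD : a * ζ1 - b * ζ2 ≠ 0) :
    (ζ1*ζ2 - a*ζ1^2 - a*ζ1*ζ2 + a*b*ζ1*ζ2)/(a*ζ1 - b*ζ2) = x ∧
    (-a^2*ζ1^2 + a*ζ1^2 + a*ζ1*ζ2 - ζ1*ζ2)/(a*ζ1 - b*ζ2) = y ∧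
    ((ζ1 - b*ζ2)*(ζ2 - b*ζ2))/(a*ζ1 - b*ζ2) = r ∧
    (-ζ1*ζ2 + b*ζ2^2 + b*ζ1*ζ2 - a*b*ζ1*ζ2)/(a*ζ1 - b*ζ2) = u := by
  simp only [div_eq_iff hD]
  refine ⟨?_, ?_, ?_, ?_⟩
  · linear_combination (-(ζ1 + ζ2) + b*ζ2 - x) * hA - y * hB + hP + (x + y) * hS
  · linear_combination (-(a*ζ1) + ζ1 + ζ2 + x) * hA + y * hB - hP - (x + y) * hS
  · linear_combination -r * hA + (b*ζ2 - ζ1 - ζ2 - u) * hB + hP + (r + u) * hS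
  · linear_combination (-(b*ζ2) - u) * hA + (ζ1 + ζ2 + u + x + y) * hB - hP - (r + u) * hS

end MMPP2

theorem reconstruction_recovers_mmpp2_general
    (x y r u : ℝ) (hy : 0 < y) (hr : 0 < r)
    (hxy : x + y ≤ 0) (hru : r + u < 0) (hgt : r + u < x + y)
    (s ζ1 ζ2 a b : ℝ)
    (hs : s = Real.sqrt ((u - x) ^ 2 + 4 * r * y))
    (hz1 : ζ1 = -(x + u + s)/2) (hz2 : ζ2 = -(x + u - s)/2)
    (ha : a = (-x - y)/ζ1) (hb : b = (-r - u)/ζ2) :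
    a*ζ1 - b*ζ2 = (r + u) - (x + y) ∧
    (r + u) - (x + y) ≠ 0 ∧
    (ζ1*ζ2 - a*ζ1^2 - a*ζ1*ζ2 + a*b*ζ1*ζ2)/(a*ζ1 - b*ζ2) = x ∧
    (-a^2*ζ1^2 + a*ζ1^2 + a*ζ1*ζ2 - ζ1*ζ2)/(a*ζ1 - b*ζ2) = y ∧
    ((ζ1 - b*ζ2)*(ζ2 - b*ζ2))/(a*ζ1 - b*ζ2) = r ∧
    (-ζ1*ζ2 + b*ζ2^2 + b*ζ1*ζ2 - a*b*ζ1*ζ2)/(a*ζ1 - b*ζ2) = u ∧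
    Matrix.diagonal ![a*ζ1, b*ζ2] = Matrix.diagonal ![-x - y, -r - u] := by
  have hs2 : s ^ 2 = discrim 1 (x + u) (x * u - r * y) := by
    rw [hs, Real.sq_sqrt (by positivity), discrim]
    ring
  obtain ⟨hS, hP⟩ := MMPP2.add_eq_and_mul_eq_of_sq_eq_discrim hs2 hz1 hz2
  have hP0 : ζ1 * ζ2 ≠ 0 := hP ▸ (MMPP2.det_pos hy hr hxy hru).ne'
  have hA : a * ζ1 = -x - y := by rw [ha, div_mul_cancel₀ _ (left_ne_zero_of_mul hP0)]
  have hB : b * ζ2 = -r - u := by rw [hb, div_mul_cancel₀ _ (right_ne_zero_of_mul hP0)]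
  have hD : a * ζ1 - b * ζ2 = (r + u) - (x + y) := by rw [hA, hB]; ring
  have hD0 : (r + u) - (x + y) ≠ 0 := (sub_neg.2 hgt).ne
  obtain ⟨hx', hy', hr', hu'⟩ := MMPP2.reconstruction_eq hS hP hA hB (hD ▸ hD0)
  exact ⟨hD, hD0, hx', hy', hr', hu', by rw [hA, hB]⟩

/-- The Lemma-2 reconstruction formulas applied to the canonical parameters of an
MMPP₂ recover the original representation. -/
theorem reconstruction_recovers_mmpp2
    (x y r u : ℝ) (hx : x < 0) (hu : u < 0) (hy : 0 < y) (hr : 0 < r)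
    (hxy : x + y ≤ 0) (hru : r + u < 0) (hgt : r + u < x + y)
    (s ζ1 ζ2 a b : ℝ)
    (hs : s = Real.sqrt ((u - x) ^ 2 + 4 * r * y))
    (hz1 : ζ1 = -(x + u + s)/2) (hz2 : ζ2 = -(x + u - s)/2)
    (ha : a = (-x - y)/ζ1) (hb : b = (-r - u)/ζ2) :
    a*ζ1 - b*ζ2 = (r + u) - (x + y) ∧
    (r + u) - (x + y) ≠ 0 ∧
    (ζ1*ζ2 - a*ζ1^2 - a*ζ1*ζ2 + a*b*ζ1*ζ2)/(a*ζ1 - b*ζ2) = x ∧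
    (-a^2*ζ1^2 + a*ζ1^2 + a*ζ1*ζ2 - ζ1*ζ2)/(a*ζ1 - b*ζ2) = y ∧
    ((ζ1 - b*ζ2)*(ζ2 - b*ζ2))/(a*ζ1 - b*ζ2) = r ∧
    (-ζ1*ζ2 + b*ζ2^2 + b*ζ1*ζ2 - a*b*ζ1*ζ2)/(a*ζ1 - b*ζ2) = u ∧
    Matrix.diagonal ![a*ζ1, b*ζ2] = Matrix.diagonal ![-x - y, -r - u] :=
  reconstruction_recovers_mmpp2_general x y r u hy hr hxy hru hgt s ζ1 ζ2 a b hs hz1 hz2 ha hb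
end

section
/- Let ζ1, ζ2 > 0, a, b ∈ [0, 1) be real numbers with aζ1 < bζ2 and ζ1 < bζ2. Let {G0, G1} be given by the Lemma-2 reconstruction formulas, i.e., G0 = (1/(aζ1 − bζ2))·[[ζ1ζ2 − aζ1² − aζ1ζ2 + abζ1ζ2, −a²ζ1² + aζ1² + aζ1ζ2 − ζ1ζ2], [(ζ1 − bζ2)(ζ2 − bζ2), −ζ1ζ2 + bζ2² + bζ1ζ2 − abζ1ζ2]] and G1 = diag(aζ1, bζ2). Then there exists an invertible 2×2 real matrix A with A·e = e (e the all-ones column vector) such that A G0 A⁻¹ = [[−ζ1, (1−a)ζ1], [0, −ζ2]] and A G1 A⁻¹ = [[aζ1, 0], [(1−b)ζ2, bζ2]]; that is, {G0, G1} is equivalent to the canonical form with parameters (ζ1, ζ2, a, b). -/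
/-!
The conjugating matrix is the shear `A = !![1, 0; q, 1 - q]`, whose rows sum to one. Since `G1` is
diagonal, `A * G1 = G1c * A` is a linear condition on `q` with the unique solution
`q = (1 - b) ζ2 / (a ζ1 - b ζ2)`; for this `q` the reconstruction formula for `G0` is exactly
`A⁻¹ * G0c * A`. `A` is invertible as long as `q ≠ 1`, i.e. `a ζ1 ≠ ζ2`.
-/

namespace Matrix

def unitRowSumShear {R : Type*} [Ring R] (q : R) : Matrix (Fin 2) (Fin 2) R :=
  !![1, 0; q, 1 - q]

section Shear

variable {R : Type*} [CommRing R]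

theorem unitRowSumShear_mulVec_one (q : R) :
    (unitRowSumShear q).mulVec ![1, 1] = ![1, 1] := by
  ext i
  fin_cases i <;> simp [unitRowSumShear, mulVec, dotProduct]

theorem det_unitRowSumShear (q : R) : (unitRowSumShear q).det = 1 - q := by
  simp [unitRowSumShear, det_fin_two_of]

theorem conj_eq_of_mul_eq_mul {n : Type*} [Fintype n] [DecidableEq n] {A M N : Matrix n n R}
    (hA : IsUnit A.det) (h : A * M = N * A) : A * M * A⁻¹ = N := by
  rw [h, mul_nonsing_inv_cancel_right _ _ hA]

end Shear

section Field

variable {K : Type*} [Field K]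

theorem unitRowSumShear_mul_diagonal {x y : K} (hxy : x - y ≠ 0) (c : K) :
    unitRowSumShear (c / (x - y)) * !![x, 0; 0, y] =
      !![x, 0; c, y] * unitRowSumShear (c / (x - y)) := by
  ext i j
  fin_cases i <;> fin_cases j <;> simp [unitRowSumShear] <;> field_simp
  ring

theorem unitRowSumShear_mul_reconstructed_G0 {ζ1 ζ2 a b : K} (hd : a*ζ1 - b*ζ2 ≠ 0) :
    unitRowSumShear ((1-b)*ζ2 / (a*ζ1 - b*ζ2)) * ((1/(a*ζ1 - b*ζ2)) •
      !![ζ1*ζ2 - a*ζ1^2 - a*ζ1*ζ2 + a*b*ζ1*ζ2,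
         -a^2*ζ1^2 + a*ζ1^2 + a*ζ1*ζ2 - ζ1*ζ2;
         (ζ1 - b*ζ2)*(ζ2 - b*ζ2),
         -ζ1*ζ2 + b*ζ2^2 + b*ζ1*ζ2 - a*b*ζ1*ζ2]) =
      !![-ζ1, (1-a)*ζ1; 0, -ζ2] * unitRowSumShear ((1-b)*ζ2 / (a*ζ1 - b*ζ2)) := by
  ext i j
  fin_cases i <;> fin_cases j <;> simp [unitRowSumShear] <;> field_simp <;> ring

end Field

end Matrix

open Matrix

theorem reconstruction_equivalent_to_canonical_general
    (ζ1 ζ2 a b : ℝ) (h2 : 0 < ζ2)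
    (hb : b ∈ Set.Ico (0:ℝ) 1)
    (hab : a*ζ1 < b*ζ2)
    (G0 G1 : Matrix (Fin 2) (Fin 2) ℝ)
    (hG0 : G0 = (1/(a*ζ1 - b*ζ2)) •
      !![ζ1*ζ2 - a*ζ1^2 - a*ζ1*ζ2 + a*b*ζ1*ζ2,
         -a^2*ζ1^2 + a*ζ1^2 + a*ζ1*ζ2 - ζ1*ζ2;
         (ζ1 - b*ζ2)*(ζ2 - b*ζ2),
         -ζ1*ζ2 + b*ζ2^2 + b*ζ1*ζ2 - a*b*ζ1*ζ2])
    (hG1 : G1 = !![a*ζ1, 0; 0, b*ζ2]) :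
    ∃ A : Matrix (Fin 2) (Fin 2) ℝ, IsUnit A ∧
      A.mulVec ![1, 1] = ![1, 1] ∧
      A * G0 * A⁻¹ = !![-ζ1, (1-a)*ζ1; 0, -ζ2] ∧
      A * G1 * A⁻¹ = !![a*ζ1, 0; (1-b)*ζ2, b*ζ2] := by
  have hd : a*ζ1 - b*ζ2 < 0 := by linarith
  have hq : (1-b)*ζ2 / (a*ζ1 - b*ζ2) < 0 :=
    div_neg_of_pos_of_neg (mul_pos (by linarith [hb.2]) h2) hd
  have hdet : IsUnit (unitRowSumShear ((1-b)*ζ2 / (a*ζ1 - b*ζ2))).det := by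
    rw [det_unitRowSumShear, isUnit_iff_ne_zero]
    linarith
  subst hG0 hG1
  exact ⟨_, (isUnit_iff_isUnit_det _).mpr hdet, unitRowSumShear_mulVec_one _,
    conj_eq_of_mul_eq_mul hdet (unitRowSumShear_mul_reconstructed_G0 hd.ne),
    conj_eq_of_mul_eq_mul hdet (unitRowSumShear_mul_diagonal hd.ne _)⟩

/-- The MMPP₂ given by the Lemma-2 reconstruction formulas is equivalent (via an
invertible matrix A with A·e = e) to the canonical form with parameters (ζ1, ζ2, a, b). -/
theorem reconstruction_equivalent_to_canonical
    (ζ1 ζ2 a b : ℝ) (h1 : 0 < ζ1) (h2 : 0 < ζ2)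
    (ha : a ∈ Set.Ico (0:ℝ) 1) (hb : b ∈ Set.Ico (0:ℝ) 1)
    (hab : a*ζ1 < b*ζ2) (h1b : ζ1 < b*ζ2)
    (G0 G1 : Matrix (Fin 2) (Fin 2) ℝ)
    (hG0 : G0 = (1/(a*ζ1 - b*ζ2)) •
      !![ζ1*ζ2 - a*ζ1^2 - a*ζ1*ζ2 + a*b*ζ1*ζ2,
         -a^2*ζ1^2 + a*ζ1^2 + a*ζ1*ζ2 - ζ1*ζ2;
         (ζ1 - b*ζ2)*(ζ2 - b*ζ2),
         -ζ1*ζ2 + b*ζ2^2 + b*ζ1*ζ2 - a*b*ζ1*ζ2])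
    (hG1 : G1 = !![a*ζ1, 0; 0, b*ζ2]) :
    ∃ A : Matrix (Fin 2) (Fin 2) ℝ, IsUnit A ∧
      A.mulVec ![1, 1] = ![1, 1] ∧
      A * G0 * A⁻¹ = !![-ζ1, (1-a)*ζ1; 0, -ζ2] ∧
      A * G1 * A⁻¹ = !![a*ζ1, 0; (1-b)*ζ2, b*ζ2] :=
  reconstruction_equivalent_to_canonical_general ζ1 ζ2 a b h2 hb hab G0 G1 hG0 hG1
end

section
/- Let x, y, r, u, w, q be real numbers with r + y ≠ 0, xu − ry ≠ 0 and rx + 2ry + yu ≠ 0. Define the 2×2 real matrices D0 = [[x, y], [r, u]], D1 = diag(w, q), D2 = diag(−x − y − w, −r − u − q), D = D1 + D2 = diag(−x − y, −r − u); let e = (1,1)ᵀ, let π be the row vector (r/(r+y), y/(r+y)), and let φ = (π D e)⁻¹ · (π D) (note π D e = −(rx + 2ry + yu)/(r + y) ≠ 0, so φ is well defined). Then the mean batch size satisfies β1 := φ (−D0)⁻¹ (D1 + 2·D2) e = (2(rx + 2ry + yu) + rw + yq) / (rx + 2ry + yu). -/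
open Matrix

/-! Stationarity `π (D0 + D1 + D2) = 0` turns `π D` into `π (-D0)`, so in `φ (-D0)⁻¹` the inverse
cancels and `β1 = (π D (D1 + 2 D2) e)/(π D e) = 2 - (π D1 e)/(π D e)` for any number of phases. -/

theorem vecMul_inv_neg_mul_dotProduct_eq_two_sub {K n : Type*} [Field K] [Fintype n] [DecidableEq n]
    {D0 D1 D2 : Matrix n n K} {π e : n → K} (hπ : π ᵥ* (D0 + D1 + D2) = 0)
    (hD0 : IsUnit D0.det) (hπDe : π ⬝ᵥ (D1 + D2) *ᵥ e ≠ 0) :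
    ((π ⬝ᵥ (D1 + D2) *ᵥ e)⁻¹ • π ᵥ* (D1 + D2)) ᵥ* ((-D0)⁻¹ * (D1 + (2 : K) • D2)) ⬝ᵥ e
      = 2 - (π ⬝ᵥ D1 *ᵥ e) / (π ⬝ᵥ (D1 + D2) *ᵥ e) := by
  have hπD : π ᵥ* (D1 + D2) = π ᵥ* (-D0) := by
    rw [vecMul_neg, eq_neg_iff_add_eq_zero, add_comm, ← vecMul_add, ← add_assoc, hπ]
  have hneg : IsUnit (-D0).det := by
    rw [det_neg]; exact (isUnit_neg_one.pow _).mul hD0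
  have hcancel : π ᵥ* (-D0) ᵥ* (-D0)⁻¹ = π := by
    rw [vecMul_vecMul, mul_nonsing_inv _ hneg, vecMul_one]
  have hsplit : (D1 + (2 : K) • D2) *ᵥ e = (2 : K) • ((D1 + D2) *ᵥ e) - D1 *ᵥ e := by
    simp only [add_mulVec, smul_mulVec]; module
  calc ((π ⬝ᵥ (D1 + D2) *ᵥ e)⁻¹ • π ᵥ* (D1 + D2)) ᵥ* ((-D0)⁻¹ * (D1 + (2 : K) • D2)) ⬝ᵥ e
      = (π ⬝ᵥ (D1 + D2) *ᵥ e)⁻¹ * (π ⬝ᵥ (D1 + (2 : K) • D2) *ᵥ e) := by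
        rw [hπD, smul_vecMul, smul_dotProduct, ← vecMul_vecMul, hcancel, ← dotProduct_mulVec,
          smul_eq_mul]
    _ = 2 - (π ⬝ᵥ D1 *ᵥ e) / (π ⬝ᵥ (D1 + D2) *ᵥ e) := by
        rw [hsplit, dotProduct_sub, dotProduct_smul, smul_eq_mul]
        field_simp

theorem vecMul_twoStateGenerator_eq_zero {K : Type*} [Field K] (r y : K) :
    ![r / (r + y), y / (r + y)] ᵥ* !![-y, y; r, -r] = 0 := by
  ext j; fin_cases j <;> simp [vecMul, dotProduct, Fin.sum_univ_two] <;> ring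

/-- Mean batch size of a BMMPP₂(2): β1 = φ(−D0)⁻¹(D1 + 2D2)e
    = (2(rx + 2ry + yu) + rw + yq)/(rx + 2ry + yu). -/
theorem bmmpp2_mean_batch_size
    (x y r u w q : ℝ) (hry : r + y ≠ 0) (hdet : x*u - r*y ≠ 0)
    (hM : r*x + 2*r*y + y*u ≠ 0)
    (D0 D1 D2 D : Matrix (Fin 2) (Fin 2) ℝ)
    (hD0 : D0 = !![x, y; r, u]) (hD1 : D1 = !![w, 0; 0, q])
    (hD2 : D2 = !![-x - y - w, 0; 0, -r - u - q]) (hD : D = D1 + D2)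
    (e : Fin 2 → ℝ) (he : e = ![1, 1])
    (π : Fin 2 → ℝ) (hπ : π = ![r/(r+y), y/(r+y)])
    (φ : Fin 2 → ℝ) (hφ : φ = (π ⬝ᵥ D.mulVec e)⁻¹ • Matrix.vecMul π D) :
    π ⬝ᵥ D.mulVec e = -(r*x + 2*r*y + y*u)/(r + y) ∧
    Matrix.vecMul φ ((-D0)⁻¹ * (D1 + (2:ℝ) • D2)) ⬝ᵥ e
      = (2*(r*x + 2*r*y + y*u) + r*w + y*q) / (r*x + 2*r*y + y*u) := by
  subst hφ hD
  have hπDe : π ⬝ᵥ (D1 + D2) *ᵥ e = -(r*x + 2*r*y + y*u)/(r + y) := by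
    subst hπ hD1 hD2 he
    simp only [dotProduct, mulVec, Matrix.add_apply, of_apply, cons_val', cons_val_fin_one,
      Fin.sum_univ_two, cons_val_zero, cons_val_one, mul_one, add_sub_cancel, add_zero, zero_add,
      neg_add_rev]
    field_simp
    ring
  have hπD1e : π ⬝ᵥ D1 *ᵥ e = (r*w + y*q)/(r + y) := by
    subst hπ hD1 he
    simp only [dotProduct, mulVec, of_apply, cons_val', cons_val_fin_one, Fin.sum_univ_two,
      cons_val_zero, cons_val_one, mul_one, add_zero, zero_add]
    field_simp
  have hstat : π ᵥ* (D0 + D1 + D2) = 0 := by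
    have hgen : D0 + D1 + D2 = !![-y, y; r, -r] := by
      subst hD0 hD1 hD2
      ext i j; fin_cases i <;> fin_cases j <;> simp; ring
    rw [hgen, hπ, vecMul_twoStateGenerator_eq_zero]
  have hD0det : IsUnit D0.det := by
    rwa [hD0, det_fin_two_of, isUnit_iff_ne_zero, mul_comm y r]
  refine ⟨hπDe, ?_⟩
  rw [vecMul_inv_neg_mul_dotProduct_eq_two_sub hstat hD0det
    (by rw [hπDe]; exact div_ne_zero (neg_ne_zero.mpr hM) hry), hπDe, hπD1e,
    div_div_div_cancel_right₀ hry, div_neg, sub_neg_eq_add, eq_div_iff hM, add_mul,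
    div_mul_cancel₀ _ hM]
  ring
end

section
/- Let x, y, r, u, w, q be real numbers with r + y ≠ 0, xu − ry ≠ 0 and rx + 2ry + yu ≠ 0. Define D0 = [[x, y], [r, u]], D1 = diag(w, q), D2 = diag(−x − y − w, −r − u − q), D = D1 + D2, e = (1,1)ᵀ, π = (r/(r+y), y/(r+y)) and φ = (π D e)⁻¹ · (π D). Then the joint moment satisfies η := φ (−D0)⁻¹ (−D0)⁻¹ (D1 + 2·D2) e = (rw(y − u) + qy(r − x) + (ry − xu)(2r + 2y)) / ((rx + 2ry + yu)(xu − ry)). -/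
open Matrix

/-!
Write `A = -D0`. The vector `(r, y)`, proportional to `π`, is a left null vector of
`Q = D0 + D`, so `(r, y) D = (r, y) A`. The normalisation of `φ` is insensitive to the scale of
`π`, hence `φ A⁻¹ = (r, y) / ((r, y) A e)` and one factor `A⁻¹` of `η` cancels:
`η = (r, y) A⁻¹ (D1 + 2 D2) e / ((r, y) A e)`, which is a single `2 × 2` inversion.
-/

section EmbeddedPhase

variable {n K : Type*} [Fintype n] [Field K]

def embeddedPhase (π : n → K) (D : Matrix n n K) (e : n → K) : n → K :=
  (π ⬝ᵥ D *ᵥ e)⁻¹ • π ᵥ* D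

theorem embeddedPhase_smul {c : K} (hc : c ≠ 0) (π : n → K) (D : Matrix n n K) (e : n → K) :
    embeddedPhase (c • π) D e = embeddedPhase π D e := by
  rw [embeddedPhase, embeddedPhase, smul_dotProduct, smul_vecMul, smul_smul, smul_eq_mul,
    _root_.mul_inv_rev, inv_mul_cancel_right₀ hc]

variable [DecidableEq n]

theorem embeddedPhase_vecMul_inv {π : n → K} {A D : Matrix n n K} (hA : IsUnit A.det)
    (hπ : π ᵥ* D = π ᵥ* A) (e : n → K) :
    embeddedPhase π D e ᵥ* A⁻¹ = (π ⬝ᵥ A *ᵥ e)⁻¹ • π := by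
  rw [embeddedPhase, smul_vecMul, dotProduct_mulVec, hπ, vecMul_vecMul, mul_nonsing_inv A hA,
    vecMul_one, ← dotProduct_mulVec]

theorem embeddedPhase_vecMul_inv_mul_inv_mul_dotProduct {π : n → K} {A D : Matrix n n K}
    (hA : IsUnit A.det) (hπ : π ᵥ* D = π ᵥ* A) (B : Matrix n n K) (e : n → K) :
    embeddedPhase π D e ᵥ* (A⁻¹ * A⁻¹ * B) ⬝ᵥ e = (π ⬝ᵥ A *ᵥ e)⁻¹ * (π ᵥ* (A⁻¹ * B) ⬝ᵥ e) := by
  rw [Matrix.mul_assoc, ← vecMul_vecMul, embeddedPhase_vecMul_inv hA hπ, smul_vecMul,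
    smul_dotProduct, smul_eq_mul]

end EmbeddedPhase

theorem Matrix.inv_fin_two_of {K : Type*} [Field K] (a b c d : K) :
    !![a, b; c, d]⁻¹ = (a * d - b * c)⁻¹ • !![d, -b; -c, a] := by
  rw [inv_def, adjugate_fin_two_of, det_fin_two_of, Ring.inverse_eq_inv']

theorem bmmpp2_joint_moment_general
    (x y r u w q : ℝ) (hry : r + y ≠ 0) (hdet : x*u - r*y ≠ 0)
    (D0 D1 D2 D : Matrix (Fin 2) (Fin 2) ℝ)
    (hD0 : D0 = !![x, y; r, u]) (hD1 : D1 = !![w, 0; 0, q])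
    (hD2 : D2 = !![-x - y - w, 0; 0, -r - u - q]) (hD : D = D1 + D2)
    (e : Fin 2 → ℝ) (he : e = ![1, 1])
    (π : Fin 2 → ℝ) (hπ : π = ![r/(r+y), y/(r+y)])
    (φ : Fin 2 → ℝ) (hφ : φ = (π ⬝ᵥ D.mulVec e)⁻¹ • Matrix.vecMul π D) :
    Matrix.vecMul φ ((-D0)⁻¹ * (-D0)⁻¹ * (D1 + (2:ℝ) • D2)) ⬝ᵥ e
      = (r*w*(y - u) + q*y*(r - x) + (r*y - x*u)*(2*r + 2*y))
          / ((r*x + 2*r*y + y*u)*(x*u - r*y)) := by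
  have hA : -D0 = !![-x, -y; -r, -u] := by
    rw [hD0]; ext i j; fin_cases i <;> fin_cases j <;> rfl
  have hunit : IsUnit (-D0).det := by
    rw [hA, det_fin_two_of, isUnit_iff_ne_zero]
    convert hdet using 1
    ring
  have hstationary : ![r, y] ᵥ* D = ![r, y] ᵥ* (-D0) := by
    rw [hA, hD, hD1, hD2]
    ext i
    fin_cases i <;>
      simp only [vecMul, dotProduct, Fin.sum_univ_two, Matrix.add_apply, of_apply, cons_val',
        cons_val_zero, cons_val_one, cons_val_fin_one, Fin.zero_eta, Fin.mk_one] <;> ring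
  have hφ' : φ = embeddedPhase ![r, y] D e := by
    have hπ' : π = (r + y)⁻¹ • ![r, y] := by
      rw [hπ]; ext i; fin_cases i <;> simp [div_eq_inv_mul]
    rw [hφ, hπ', ← embeddedPhase_smul (inv_ne_zero hry)]
    rfl
  have hnorm : ![r, y] ⬝ᵥ (-D0) *ᵥ e = -(r*x + 2*r*y + y*u) := by
    rw [hA, he]
    simp only [mulVec, dotProduct, Fin.sum_univ_two, of_apply, cons_val', cons_val_zero,
      cons_val_one, cons_val_fin_one]
    ring
  have hnum : ![r, y] ᵥ* ((-D0)⁻¹ * (D1 + (2:ℝ) • D2)) ⬝ᵥ e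
      = -(r*w*(y - u) + q*y*(r - x) + (r*y - x*u)*(2*r + 2*y)) / (x*u - r*y) := by
    rw [hA, inv_fin_two_of, hD1, hD2, he]
    simp only [vecMul, dotProduct, Fin.sum_univ_two, Matrix.mul_apply, Matrix.add_apply,
      Matrix.smul_apply, smul_eq_mul, of_apply, cons_val', cons_val_zero, cons_val_one,
      cons_val_fin_one]
    ring
  rw [hφ', embeddedPhase_vecMul_inv_mul_inv_mul_dotProduct hunit hstationary, hnorm, hnum,
    inv_neg, div_eq_mul_inv, div_eq_mul_inv, mul_inv]
  ring

/-- Joint moment of a BMMPP₂(2): η = φ(−D0)⁻²(D1 + 2D2)e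
    = (rw(y−u) + qy(r−x) + (ry−xu)(2r+2y))/((rx+2ry+yu)(xu−ry)). -/
theorem bmmpp2_joint_moment
    (x y r u w q : ℝ) (hry : r + y ≠ 0) (hdet : x*u - r*y ≠ 0)
    (hM : r*x + 2*r*y + y*u ≠ 0)
    (D0 D1 D2 D : Matrix (Fin 2) (Fin 2) ℝ)
    (hD0 : D0 = !![x, y; r, u]) (hD1 : D1 = !![w, 0; 0, q])
    (hD2 : D2 = !![-x - y - w, 0; 0, -r - u - q]) (hD : D = D1 + D2)
    (e : Fin 2 → ℝ) (he : e = ![1, 1])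
    (π : Fin 2 → ℝ) (hπ : π = ![r/(r+y), y/(r+y)])
    (φ : Fin 2 → ℝ) (hφ : φ = (π ⬝ᵥ D.mulVec e)⁻¹ • Matrix.vecMul π D) :
    Matrix.vecMul φ ((-D0)⁻¹ * (-D0)⁻¹ * (D1 + (2:ℝ) • D2)) ⬝ᵥ e
      = (r*w*(y - u) + q*y*(r - x) + (r*y - x*u)*(2*r + 2*y))
          / ((r*x + 2*r*y + y*u)*(x*u - r*y)) :=
  bmmpp2_joint_moment_general x y r u w q hry hdet D0 D1 D2 D hD0 hD1 hD2 hD e he π hπ φ hφ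
end

section
/- Let x, y, r, u be real numbers with y ≠ 0, r ≠ 0, r + u − x − y ≠ 0, xu − ry ≠ 0 and rx + 2ry + yu ≠ 0, and let β1, η, w, q be real numbers satisfying β1 = (2(rx + 2ry + yu) + rw + yq) / (rx + 2ry + yu) and η = (rw(y − u) + qy(r − x) + (ry − xu)(2r + 2y)) / ((rx + 2ry + yu)(xu − ry)). Then w and q are uniquely determined by (x, y, r, u, β1, η); explicitly, q = ((rx + 2ry + yu)·((xu − ry)η − (y − u)(β1 − 2)) − (ry − xu)(2r + 2y)) / (y(r + u − x − y)) and w = ((rx + 2ry + yu)·((β1 − 2)(r − x) − (xu − ry)η) + (ry − xu)(2r + 2y)) / (r(r + u − x − y)). -/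
/-- Given D0 (i.e. x, y, r, u) and the moments β1 and η of a BMMPP₂(2), the
remaining parameters w and q are uniquely determined by the explicit formulas. -/
theorem bmmpp2_w_q_from_moments
    (x y r u : ℝ) (hy : y ≠ 0) (hr : r ≠ 0) (hd : r + u - x - y ≠ 0)
    (hdet : x*u - r*y ≠ 0) (hM : r*x + 2*r*y + y*u ≠ 0)
    (β1 η w q : ℝ)
    (hβ : β1 = (2*(r*x + 2*r*y + y*u) + r*w + y*q) / (r*x + 2*r*y + y*u))
    (hη : η = (r*w*(y - u) + q*y*(r - x) + (r*y - x*u)*(2*r + 2*y))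
                / ((r*x + 2*r*y + y*u)*(x*u - r*y))) :
    q = ((r*x + 2*r*y + y*u)*((x*u - r*y)*η - (y - u)*(β1 - 2))
          - (r*y - x*u)*(2*r + 2*y)) / (y*(r + u - x - y)) ∧
    w = ((r*x + 2*r*y + y*u)*((β1 - 2)*(r - x) - (x*u - r*y)*η)
          + (r*y - x*u)*(2*r + 2*y)) / (r*(r + u - x - y)) := by
  -- Cleared of denominators, `hβ` and `hη` are a linear system in `(w, q)` with determinant
  -- `r * y * (r + u - x - y)`; the two answers are its Cramer's rule solutions.
  rw [eq_div_iff hM] at hβ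
  rw [eq_div_iff (mul_ne_zero hM hdet)] at hη
  constructor
  · rw [eq_div_iff (mul_ne_zero hy hd)]
    linear_combination (y - u) * hβ - hη
  · rw [eq_div_iff (mul_ne_zero hr hd)]
    linear_combination (x - r) * hβ + hη
end

section
/- Let x, y, r, u be real numbers with y ≠ 0, r ≠ 0, r + u − x − y ≠ 0, xu − ry ≠ 0 and rx + 2ry + yu ≠ 0. Define, for real w and q, B(w, q) = (2(rx + 2ry + yu) + rw + yq) / (rx + 2ry + yu) and H(w, q) = (rw(y − u) + qy(r − x) + (ry − xu)(2r + 2y)) / ((rx + 2ry + yu)(xu − ry)). Then the map (w, q) ↦ (B(w, q), H(w, q)) is injective: if B(w, q) = B(w', q') and H(w, q) = H(w', q'), then w = w' and q = q'. Hence two BMMPP₂(2) representations with the same matrix D0 = [[x, y], [r, u]] and the same values of the moments β1 and η must have identical matrices D1 and D2. -/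
/-! Clearing the common denominators, β1 and η are affine functions of `(w, q)` whose linear
parts are `r w + y q` and `r (y - u) w + y (r - x) q`. This 2×2 system has determinant
`r y (r + u - x - y) ≠ 0`, so it determines `(w, q)`. -/

theorem eq_and_eq_of_det_ne_zero {K : Type*} [Field K] {a b c d w q w' q' : K}
    (hdet : a * d - b * c ≠ 0)
    (h₁ : a * w + b * q = a * w' + b * q') (h₂ : c * w + d * q = c * w' + d * q') :
    w = w' ∧ q = q' := by
  constructor
  · refine sub_eq_zero.mp ((mul_eq_zero.mp ?_).resolve_left hdet)
    linear_combination d * h₁ - b * h₂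
  · refine sub_eq_zero.mp ((mul_eq_zero.mp ?_).resolve_left hdet)
    linear_combination a * h₂ - c * h₁

/-- The map (w, q) ↦ (β1, η) for a BMMPP₂(2) with fixed D0 is injective: two
representations with the same D0, β1 and η have identical D1 and D2. -/
theorem bmmpp2_moments_injective
    (x y r u : ℝ) (hy : y ≠ 0) (hr : r ≠ 0) (hd : r + u - x - y ≠ 0)
    (hdet : x*u - r*y ≠ 0) (hM : r*x + 2*r*y + y*u ≠ 0)
    (w q w' q' : ℝ)
    (hB : (2*(r*x + 2*r*y + y*u) + r*w + y*q) / (r*x + 2*r*y + y*u)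
        = (2*(r*x + 2*r*y + y*u) + r*w' + y*q') / (r*x + 2*r*y + y*u))
    (hH : (r*w*(y - u) + q*y*(r - x) + (r*y - x*u)*(2*r + 2*y))
            / ((r*x + 2*r*y + y*u)*(x*u - r*y))
        = (r*w'*(y - u) + q'*y*(r - x) + (r*y - x*u)*(2*r + 2*y))
            / ((r*x + 2*r*y + y*u)*(x*u - r*y))) :
    w = w' ∧ q = q' := by
  have hβ : r * w + y * q = r * w' + y * q' := by
    rw [div_left_inj' hM] at hB
    linarith
  have hη : r * (y - u) * w + y * (r - x) * q = r * (y - u) * w' + y * (r - x) * q' := by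
    rw [div_left_inj' (mul_ne_zero hM hdet)] at hH
    linarith
  have hdet_eq : r * (y * (r - x)) - y * (r * (y - u)) = r * y * (r + u - x - y) := by ring
  refine eq_and_eq_of_det_ne_zero ?_ hβ hη
  rw [hdet_eq]
  exact mul_ne_zero (mul_ne_zero hr hy) hd
end

section
/- Let x, y, r, u be real numbers with y ≠ 0, r ≠ 0, r + y ≠ 0, r + u − x − y ≠ 0, xu − ry ≠ 0 and rx + 2ry + yu ≠ 0. Set D0 = [[x, y], [r, u]], D = diag(−x − y, −r − u), e = (1,1)ᵀ, π = (r/(r+y), y/(r+y)) and φ = (π D e)⁻¹ π D. Let K ≥ 2 and let (D_1, …, D_K) and (D̂_1, …, D̂_K) be two K-tuples of real 2×2 diagonal matrices with Σ_{k=1}^K D_k = D = Σ_{k=1}^K D̂_k. If for every i = 1, …, K−1 one has φ(−D0)⁻¹(D_i + 2(D − D_i))e = φ(−D0)⁻¹(D̂_i + 2(D − D̂_i))e and φ(−D0)⁻¹(−D0)⁻¹(D_i + 2(D − D_i))e = φ(−D0)⁻¹(−D0)⁻¹(D̂_i + 2(D − D̂_i))e, then D_i = D̂_i for every i = 1, …,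 K. In other words, a BMMPP₂(K) with fixed matrix D0 is completely determined by the 2(K−1) moments β1^(i), η^(i), i = 1, …, K−1, of its aggregated two-batch processes. -/
/-!
Write `φ = c⁻¹ • π D` with `c = π D e`. Stationarity `π (D0 + D) = 0` gives `π D (-D0)⁻¹ = π`, so
the two moments of the `i`-th aggregated process determine `π · dᵢ` and `π (-D0)⁻¹ · dᵢ`, where
`dᵢ` is the diagonal of `Dᵢ`. Multiplying the rows `π` and `π (-D0)⁻¹` by `-D0` gives `π D` and
`π`, whose determinant `π₀ π₁ (D₀₀ - D₁₁)` is nonzero; hence `dᵢ` is determined for `i < K`, and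
`D_K = D - ∑_{i<K} Dᵢ`.
-/

open Matrix

theorem Fintype.eq_of_sum_eq_of_forall_ne {ι M : Type*} [Fintype ι] [AddCommGroup M]
    {f g : ι → M} (h : ∑ i, f i = ∑ i, g i) (j : ι) (hne : ∀ i ≠ j, f i = g i) : f = g := by
  classical
  funext i
  obtain rfl | hij := eq_or_ne i j
  · rw [← Finset.add_sum_erase _ _ (Finset.mem_univ i),
      ← Finset.add_sum_erase _ _ (Finset.mem_univ i),
      Finset.sum_congr rfl fun k hk => hne k (Finset.ne_of_mem_erase hk)] at h
    exact add_right_cancel h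
  · exact hne i hij

theorem Fin.eq_of_sum_eq_of_forall_lt_pred {M : Type*} [AddCommGroup M] {K : ℕ}
    {f g : Fin K → M} (h : ∑ i, f i = ∑ i, g i)
    (hlt : ∀ i : Fin K, (i : ℕ) < K - 1 → f i = g i) : f = g := by
  rcases K with _ | K
  · exact funext fun i => i.elim0
  · exact Fintype.eq_of_sum_eq_of_forall_ne h (Fin.last K) fun i hi =>
      hlt i (by simpa using Fin.val_lt_last hi)

namespace Matrix
variable {n R : Type*} [Fintype n]

theorem IsDiag.mulVec_one [NonAssocSemiring R] {A : Matrix n n R} (hA : A.IsDiag) :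
    A *ᵥ 1 = A.diag := by
  classical
  rw [← hA.diagonal_diag]
  ext i
  simp [mulVec_diagonal]

theorem IsDiag.eq_of_mulVec_mulVec_one_eq [DecidableEq n] [CommRing R] [NoZeroDivisors R]
    {W A A' : Matrix n n R} (hW : W.det ≠ 0) (hA : A.IsDiag) (hA' : A'.IsDiag)
    (h : W *ᵥ (A *ᵥ 1) = W *ᵥ (A' *ᵥ 1)) : A = A' := by
  rw [← hA.diagonal_diag, ← hA'.diagonal_diag, ← hA.mulVec_one, ← hA'.mulVec_one,
    mulVec_injective_of_det_ne_zero hW h]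

theorem vecMul_mul_add_two_smul_sub_dotProduct_eq_iff [CommRing R] (v e : n → R)
    (P D A A' : Matrix n n R) :
    v ᵥ* (P * (A + (2 : R) • (D - A))) ⬝ᵥ e = v ᵥ* (P * (A' + (2 : R) • (D - A'))) ⬝ᵥ e ↔
      v ᵥ* P ⬝ᵥ (A *ᵥ e) = v ᵥ* P ⬝ᵥ (A' *ᵥ e) := by
  simp only [← vecMul_vecMul, ← dotProduct_mulVec, add_mulVec, smul_mulVec, sub_mulVec,
    dotProduct_add, dotProduct_smul, dotProduct_sub]
  constructor <;> intro h <;> linear_combination (-1 : R) * h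

theorem IsDiag.det_of_vecMul_cons [CommRing R] {π : Fin 2 → R} {D : Matrix (Fin 2) (Fin 2) R}
    (hD : D.IsDiag) : det (of ![π ᵥ* D, π]) = π 0 * π 1 * (D 0 0 - D 1 1) := by
  rw [← hD.diagonal_diag]
  simp only [det_fin_two, of_apply, cons_val_zero, cons_val_one, cons_val_fin_one,
    vecMul_diagonal, diagonal_apply_eq, diag_apply]
  ring

theorem IsDiag.eq_of_aggregated_moments_eq {𝕜 : Type*} [Field 𝕜]
    {π φ : Fin 2 → 𝕜} {D0 D A A' : Matrix (Fin 2) (Fin 2) 𝕜}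
    (hD0 : D0.det ≠ 0) (hπ : π ᵥ* (D0 + D) = 0) (hc : π ⬝ᵥ D *ᵥ 1 ≠ 0)
    (hD : D.IsDiag) (hπ₀ : π 0 ≠ 0) (hπ₁ : π 1 ≠ 0) (hD₀₁ : D 0 0 ≠ D 1 1)
    (hφ : φ = (π ⬝ᵥ D *ᵥ 1)⁻¹ • π ᵥ* D) (hA : A.IsDiag) (hA' : A'.IsDiag)
    (h₁ : φ ᵥ* ((-D0)⁻¹ * (A + (2 : 𝕜) • (D - A))) ⬝ᵥ 1
      = φ ᵥ* ((-D0)⁻¹ * (A' + (2 : 𝕜) • (D - A'))) ⬝ᵥ 1)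
    (h₂ : φ ᵥ* ((-D0)⁻¹ * (-D0)⁻¹ * (A + (2 : 𝕜) • (D - A))) ⬝ᵥ 1
      = φ ᵥ* ((-D0)⁻¹ * (-D0)⁻¹ * (A' + (2 : 𝕜) • (D - A'))) ⬝ᵥ 1) :
    A = A' := by
  have hnegD0 : IsUnit (-D0).det := by
    rw [det_neg]
    exact (isUnit_neg_one.pow _).mul (isUnit_iff_ne_zero.mpr hD0)
  have hπD : π ᵥ* (-D0) = π ᵥ* D := by
    rw [vecMul_neg, neg_eq_iff_add_eq_zero, ← vecMul_add, hπ]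
  have hw₁ : φ ᵥ* (-D0)⁻¹ = (π ⬝ᵥ D *ᵥ 1)⁻¹ • π := by
    rw [hφ, smul_vecMul, ← hπD, vecMul_vecMul, mul_nonsing_inv _ hnegD0, vecMul_one]
  have hw₂ : φ ᵥ* ((-D0)⁻¹ * (-D0)⁻¹) = (π ⬝ᵥ D *ᵥ 1)⁻¹ • π ᵥ* (-D0)⁻¹ := by
    rw [← vecMul_vecMul, hw₁, smul_vecMul]
  rw [vecMul_mul_add_two_smul_sub_dotProduct_eq_iff, hw₁, smul_dotProduct, smul_dotProduct,
    smul_eq_mul, smul_eq_mul, mul_right_inj' (inv_ne_zero hc)] at h₁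
  rw [vecMul_mul_add_two_smul_sub_dotProduct_eq_iff, hw₂, smul_dotProduct, smul_dotProduct,
    smul_eq_mul, smul_eq_mul, mul_right_inj' (inv_ne_zero hc)] at h₂
  have hW : det (of ![π, π ᵥ* (-D0)⁻¹]) ≠ 0 := by
    have hWD0 : of ![π, π ᵥ* (-D0)⁻¹] * (-D0) = of ![π ᵥ* D, π] := by
      rw [cons_mul, cons_mul, hπD, vecMul_vecMul, nonsing_inv_mul _ hnegD0, vecMul_one, empty_mul]
      rfl
    refine left_ne_zero_of_mul (b := (-D0).det) ?_
    rw [← det_mul, hWD0, hD.det_of_vecMul_cons]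
    exact mul_ne_zero (mul_ne_zero hπ₀ hπ₁) (sub_ne_zero.mpr hD₀₁)
  refine hA.eq_of_mulVec_mulVec_one_eq hW hA' ?_
  simp only [cons_mulVec, empty_mulVec, h₁, h₂]

end Matrix

theorem bmmppK_determined_by_aggregated_moments_general
    (x y r u : ℝ) (hy : y ≠ 0) (hr : r ≠ 0) (hry : r + y ≠ 0)
    (hd : r + u - x - y ≠ 0) (hdet : x*u - r*y ≠ 0) (hM : r*x + 2*r*y + y*u ≠ 0)
    (D0 D : Matrix (Fin 2) (Fin 2) ℝ)
    (hD0 : D0 = !![x, y; r, u]) (hD : D = !![-x - y, 0; 0, -r - u])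
    (e : Fin 2 → ℝ) (he : e = ![1, 1])
    (π : Fin 2 → ℝ) (hπ : π = ![r/(r+y), y/(r+y)])
    (φ : Fin 2 → ℝ) (hφ : φ = (π ⬝ᵥ D.mulVec e)⁻¹ • Matrix.vecMul π D)
    (K : ℕ)
    (Dk Dk' : Fin K → Matrix (Fin 2) (Fin 2) ℝ)
    (hdiag : ∀ k, (Dk k).IsDiag) (hdiag' : ∀ k, (Dk' k).IsDiag)
    (hsum : ∑ k, Dk k = D) (hsum' : ∑ k, Dk' k = D)
    (hmom : ∀ i : Fin K, (i : ℕ) < K - 1 →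
      (Matrix.vecMul φ ((-D0)⁻¹ * (Dk i + (2:ℝ) • (D - Dk i))) ⬝ᵥ e
        = Matrix.vecMul φ ((-D0)⁻¹ * (Dk' i + (2:ℝ) • (D - Dk' i))) ⬝ᵥ e) ∧
      (Matrix.vecMul φ ((-D0)⁻¹ * (-D0)⁻¹ * (Dk i + (2:ℝ) • (D - Dk i))) ⬝ᵥ e
        = Matrix.vecMul φ ((-D0)⁻¹ * (-D0)⁻¹ * (Dk' i + (2:ℝ) • (D - Dk' i))) ⬝ᵥ e)) :
    ∀ i, Dk i = Dk' i := by
  have he₁ : e = 1 := he.trans (by ext j; fin_cases j <;> rfl)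
  subst hD0 hD he₁ hπ
  have hdetD0 : det !![x, y; r, u] ≠ 0 := by rwa [det_fin_two_of, mul_comm y]
  have hstat : ![r/(r+y), y/(r+y)] ᵥ* (!![x, y; r, u] + !![-x - y, 0; 0, -r - u]) = 0 := by
    ext j
    fin_cases j <;>
      simp only [vecMul, dotProduct, Fin.sum_univ_two, Matrix.add_apply, of_apply, cons_val_zero,
        cons_val_one, cons_val_fin_one, Pi.zero_apply, Fin.zero_eta, Fin.mk_one] <;> ring
  have hc : ![r/(r+y), y/(r+y)] ⬝ᵥ !![-x - y, 0; 0, -r - u] *ᵥ 1 ≠ 0 := by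
    have hc' : ![r/(r+y), y/(r+y)] ⬝ᵥ !![-x - y, 0; 0, -r - u] *ᵥ 1
        = -(r*x + 2*r*y + y*u) / (r + y) := by
      simp only [dotProduct, mulVec, of_apply, cons_val', cons_val_fin_one, Pi.one_apply, mul_one,
        Fin.sum_univ_two, cons_val_zero, cons_val_one, add_zero, zero_add]
      ring
    rw [hc']
    exact div_ne_zero (neg_ne_zero.mpr hM) hry
  have hDdiag : (!![-x - y, 0; 0, -r - u]).IsDiag :=
    diagonal_fin_two ![-x - y, -r - u] ▸ isDiag_diagonal _
  have hD₀₁ : -x - y ≠ -r - u := fun h => hd (by linarith)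
  refine congrFun (Fin.eq_of_sum_eq_of_forall_lt_pred (hsum.trans hsum'.symm) fun i hi => ?_)
  exact IsDiag.eq_of_aggregated_moments_eq hdetD0 hstat hc hDdiag (div_ne_zero hr hry)
    (div_ne_zero hy hry) hD₀₁ hφ (hdiag i) (hdiag' i) (hmom i hi).1 (hmom i hi).2

/-- A BMMPP₂(K) with fixed matrix D0 is completely determined by the moments
β1^(i), η^(i), i = 1, …, K−1, of its aggregated two-batch processes. -/
theorem bmmppK_determined_by_aggregated_moments
    (x y r u : ℝ) (hy : y ≠ 0) (hr : r ≠ 0) (hry : r + y ≠ 0)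
    (hd : r + u - x - y ≠ 0) (hdet : x*u - r*y ≠ 0) (hM : r*x + 2*r*y + y*u ≠ 0)
    (D0 D : Matrix (Fin 2) (Fin 2) ℝ)
    (hD0 : D0 = !![x, y; r, u]) (hD : D = !![-x - y, 0; 0, -r - u])
    (e : Fin 2 → ℝ) (he : e = ![1, 1])
    (π : Fin 2 → ℝ) (hπ : π = ![r/(r+y), y/(r+y)])
    (φ : Fin 2 → ℝ) (hφ : φ = (π ⬝ᵥ D.mulVec e)⁻¹ • Matrix.vecMul π D)
    (K : ℕ) (hK : 2 ≤ K)
    (Dk Dk' : Fin K → Matrix (Fin 2) (Fin 2) ℝ)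
    (hdiag : ∀ k, (Dk k).IsDiag) (hdiag' : ∀ k, (Dk' k).IsDiag)
    (hsum : ∑ k, Dk k = D) (hsum' : ∑ k, Dk' k = D)
    (hmom : ∀ i : Fin K, (i : ℕ) < K - 1 →
      (Matrix.vecMul φ ((-D0)⁻¹ * (Dk i + (2:ℝ) • (D - Dk i))) ⬝ᵥ e
        = Matrix.vecMul φ ((-D0)⁻¹ * (Dk' i + (2:ℝ) • (D - Dk' i))) ⬝ᵥ e) ∧
      (Matrix.vecMul φ ((-D0)⁻¹ * (-D0)⁻¹ * (Dk i + (2:ℝ) • (D - Dk i))) ⬝ᵥ e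
        = Matrix.vecMul φ ((-D0)⁻¹ * (-D0)⁻¹ * (Dk' i + (2:ℝ) • (D - Dk' i))) ⬝ᵥ e)) :
    ∀ i, Dk i = Dk' i :=
  bmmppK_determined_by_aggregated_moments_general x y r u hy hr hry hd hdet hM D0 D hD0 hD e he π hπ
    φ hφ K Dk Dk' hdiag hdiag' hsum hsum' hmom
end

section
/- Let n ≥ 1 and K ≥ 1, let D0 be an invertible real n×n matrix and D a real n×n matrix such that (D0 + D)e = 0, where e is the all-ones column vector. Let p_1, …, p_K be nonnegative reals with p_1 + … + p_K = 1, set D_k = p_k·D for k = 1, …, K and D1* = Σ_{k=1}^K k·D_k. Then for every row vector φ with φ·e = 1 and every integer l ≥ 1: φ(−D0)⁻¹D1*·((−D0)⁻¹D)^{l−1}·(−D0)⁻¹D1*e = (Σ_{k=1}^K k·p_k)² = β1², where β1 = φ(−D0)⁻¹D1*e. Consequently, for a MAP with i.i.d. batch arrivals the lag-l autocovariance of the batch-size sequence, φ(−D0)⁻¹D1*[(−D0)⁻¹D]^{l−1}(−D0)⁻¹D1*e − β1², vanishes for every l ≥ 1; in particular the first-lag batch autocorrelation ρ_B(1) is zero.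 -/
open Matrix

/-! With `P = (-D0)⁻¹ D`, the condition `(D0 + D) e = 0` says exactly `P e = e`, and i.i.d. batch
sizes make `(-D0)⁻¹ D1*` the scalar multiple `β • P` with `β = Σ k p_k`. The lag-`l` product is then
`β² • P ^ (l + 1)`, which fixes `e`, so pairing with `φ` (where `φ e = 1`) gives `β²`; the same
argument with a single factor gives `β1 = β`. -/

section

variable {ι R : Type*} [Fintype ι] [DecidableEq ι] [CommRing R]

theorem Matrix.inv_neg_mul_mulVec_eq_self_of_add_mulVec_eq_zero {A B : Matrix ι ι R} {v : ι → R}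
    (hA : IsUnit A.det) (hAB : (A + B) *ᵥ v = 0) : ((-A)⁻¹ * B) *ᵥ v = v := by
  have hnegA : IsUnit (-A).det := by
    rw [det_neg]
    exact ((isUnit_one.neg).pow _).mul hA
  have hBv : B *ᵥ v = (-A) *ᵥ v := by
    rw [neg_mulVec, eq_neg_iff_add_eq_zero, add_comm, ← add_mulVec, hAB]
  rw [← mulVec_mulVec, hBv, mulVec_mulVec, nonsing_inv_mul _ hnegA, one_mulVec]

theorem Matrix.pow_mulVec_eq_self {M : Matrix ι ι R} {v : ι → R} (hM : M *ᵥ v = v) (k : ℕ) :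
    (M ^ k) *ᵥ v = v := by
  induction k with
  | zero => exact one_mulVec v
  | succ k ih => rw [pow_succ, ← mulVec_mulVec, hM, ih]

theorem Matrix.vecMul_smul_pow_dotProduct_eq {M : Matrix ι ι R} {v φ : ι → R}
    (hM : M *ᵥ v = v) (hφ : φ ⬝ᵥ v = 1) (a : R) (k : ℕ) :
    vecMul φ (a • M ^ k) ⬝ᵥ v = a := by
  rw [← dotProduct_mulVec, smul_mulVec, pow_mulVec_eq_self hM, dotProduct_smul, hφ, smul_eq_mul,
    mul_one]

end

theorem iid_batches_zero_autocovariance_general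
    (n K : ℕ)
    (D0 D : Matrix (Fin n) (Fin n) ℝ) (hD0 : IsUnit D0.det)
    (e : Fin n → ℝ)
    (hQ : (D0 + D).mulVec e = 0)
    (p : Fin K → ℝ)
    (Dk : Fin K → Matrix (Fin n) (Fin n) ℝ) (hDk : ∀ k, Dk k = p k • D)
    (Dstar : Matrix (Fin n) (Fin n) ℝ)
    (hDstar : Dstar = ∑ k : Fin K, (((k : ℕ) + 1 : ℝ)) • Dk k) :
    ∀ φ : Fin n → ℝ, φ ⬝ᵥ e = 1 → ∀ l : ℕ, 1 ≤ l →
      (Matrix.vecMul φ ((-D0)⁻¹ * Dstar * ((-D0)⁻¹ * D) ^ (l - 1)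
            * ((-D0)⁻¹ * Dstar)) ⬝ᵥ e
          = (∑ k : Fin K, ((k : ℕ) + 1 : ℝ) * p k) ^ 2) ∧
      (Matrix.vecMul φ ((-D0)⁻¹ * Dstar * ((-D0)⁻¹ * D) ^ (l - 1)
            * ((-D0)⁻¹ * Dstar)) ⬝ᵥ e
          = (Matrix.vecMul φ ((-D0)⁻¹ * Dstar) ⬝ᵥ e) ^ 2) := by
  intro φ hφ l _
  set β : ℝ := ∑ k : Fin K, ((k : ℕ) + 1 : ℝ) * p k
  set P := (-D0)⁻¹ * D
  have hP : P *ᵥ e = e := inv_neg_mul_mulVec_eq_self_of_add_mulVec_eq_zero hD0 hQ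
  have hS : (-D0)⁻¹ * Dstar = β • P := by
    simp only [hDstar, hDk, smul_smul, ← Finset.sum_smul, mul_smul_comm, β, P]
  have hlag : β • P * P ^ (l - 1) * (β • P) = β ^ 2 • P ^ (l - 1 + 2) := by
    rw [smul_mul_assoc, smul_mul_assoc, mul_smul_comm, smul_smul, ← sq, ← pow_succ', ← pow_succ]
  have hβ : vecMul φ (β • P) ⬝ᵥ e = β := by
    simpa using vecMul_smul_pow_dotProduct_eq hP hφ β 1
  rw [hS, hlag, vecMul_smul_pow_dotProduct_eq hP hφ, hβ]
  exact ⟨rfl, rfl⟩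

/-- For a MAP with i.i.d. batch arrivals, the lag-l autocovariance of the
batch-size sequence vanishes for every l ≥ 1; in particular ρ_B(1) = 0. -/
theorem iid_batches_zero_autocovariance
    (n K : ℕ) (hn : 1 ≤ n) (hK : 1 ≤ K)
    (D0 D : Matrix (Fin n) (Fin n) ℝ) (hD0 : IsUnit D0.det)
    (e : Fin n → ℝ) (he : e = fun _ => 1)
    (hQ : (D0 + D).mulVec e = 0)
    (p : Fin K → ℝ) (hp : ∀ k, 0 ≤ p k) (hp1 : ∑ k, p k = 1)
    (Dk : Fin K → Matrix (Fin n) (Fin n) ℝ) (hDk : ∀ k, Dk k = p k • D)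
    (Dstar : Matrix (Fin n) (Fin n) ℝ)
    (hDstar : Dstar = ∑ k : Fin K, (((k : ℕ) + 1 : ℝ)) • Dk k) :
    ∀ φ : Fin n → ℝ, φ ⬝ᵥ e = 1 → ∀ l : ℕ, 1 ≤ l →
      (Matrix.vecMul φ ((-D0)⁻¹ * Dstar * ((-D0)⁻¹ * D) ^ (l - 1)
            * ((-D0)⁻¹ * Dstar)) ⬝ᵥ e
          = (∑ k : Fin K, ((k : ℕ) + 1 : ℝ) * p k) ^ 2) ∧
      (Matrix.vecMul φ ((-D0)⁻¹ * Dstar * ((-D0)⁻¹ * D) ^ (l - 1)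
            * ((-D0)⁻¹ * Dstar)) ⬝ᵥ e
          = (Matrix.vecMul φ ((-D0)⁻¹ * Dstar) ⬝ᵥ e) ^ 2) :=
  iid_batches_zero_autocovariance_general n K D0 D hD0 e hQ p Dk hDk Dstar hDstar
end
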